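/- arXiv:2002.04788 — 3 statements merged into one kernel-verified Lean document; each statement's English description precedes it below -/
import Mathlib

section
/- For any measurable classifier h : X → [0,1], max_{s∈{0,1}} L_s(h) ≥ (1/2)(max_{s∈{0,1}} E_{X∼P_s}[|y₁(X) − y₀(X)|] − D_TV(P₀, P₁)). In particular, no group-blind classifier can achieve small risk on both groups when the labeling functions disagree substantially and the unlabeled distributions are close. -/
open MeasureTheory

/-- Group risk under ℓ₁ loss. -/
noncomputable def risk {X : Type*} [MeasurableSpace X]
    (P : Measure X) (y h : X → ℝ) : ℝ := ∫ x, |h x - y x| ∂P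

/-- Total variation distance `sup_E |P₀(E) − P₁(E)|` over measurable sets. -/
noncomputable def tvDist {X : Type*} [MeasurableSpace X] (P Q : Measure X) : ℝ :=
  sSup {d | ∃ E : Set X, MeasurableSet E ∧ d = |(P E).toReal - (Q E).toReal|}

/-!
For `f` with values in `[0, 1]`, take a Hahn decomposition `s` with `Q ≤ P` on `s` and `P ≤ Q`
on `sᶜ`. On `sᶜ` the `P`-integral of `f` is below the `Q`-integral; on `s` the same holds for
`1 - f`, which gives `∫_s f dP - ∫_s f dQ ≤ P s - Q s ≤ D_TV(P, Q)`. Applied to the losses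
`|h - y_s|`, this moves a risk from one group to the other at the cost of `D_TV`, and the
triangle inequality `|y₁ - y₀| ≤ |h - y₀| + |h - y₁|` bounds the label disagreement under either
group by `L₀(h) + L₁(h) + D_TV ≤ 2 max_s L_s(h) + D_TV`.
-/

section TotalVariation

variable {X : Type*} [MeasurableSpace X]

lemma tvDist_comm (P Q : Measure X) : tvDist P Q = tvDist Q P := by
  simp only [tvDist, abs_sub_comm (P _).toReal]

lemma abs_measureReal_sub_le_tvDist (P Q : Measure X) [IsFiniteMeasure P] [IsFiniteMeasure Q]
    {E : Set X} (hE : MeasurableSet E) : |P.real E - Q.real E| ≤ tvDist P Q := by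
  refine le_csSup ⟨P.real Set.univ + Q.real Set.univ, ?_⟩ ⟨E, hE, rfl⟩
  rintro d ⟨F, -, rfl⟩
  change |P.real F - Q.real F| ≤ _
  have hP : P.real F ≤ P.real Set.univ := measureReal_mono (Set.subset_univ F)
  have hQ : Q.real F ≤ Q.real Set.univ := measureReal_mono (Set.subset_univ F)
  have hP0 : 0 ≤ P.real Set.univ := measureReal_nonneg
  have hQ0 : 0 ≤ Q.real Set.univ := measureReal_nonneg
  exact abs_sub_le_of_nonneg_of_le measureReal_nonneg (by linarith) measureReal_nonneg
    (by linarith)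

lemma integrable_of_mem_Icc (μ : Measure X) [IsFiniteMeasure μ] {f : X → ℝ}
    (hf : Measurable f) (hf01 : ∀ x, f x ∈ Set.Icc (0 : ℝ) 1) : Integrable f μ :=
  .of_bound hf.aestronglyMeasurable 1 <| .of_forall fun x => by
    rw [Real.norm_of_nonneg (hf01 x).1]; exact (hf01 x).2

lemma integral_le_integral_add_tvDist (P Q : Measure X) [IsFiniteMeasure P] [IsFiniteMeasure Q]
    {f : X → ℝ} (hf : Measurable f) (hf01 : ∀ x, f x ∈ Set.Icc (0 : ℝ) 1) :
    ∫ x, f x ∂P ≤ ∫ x, f x ∂Q + tvDist P Q := by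
  obtain ⟨s, hs, hQP, hPQ⟩ := exists_isHahnDecomposition Q P
  have hint (μ : Measure X) [IsFiniteMeasure μ] : Integrable f μ :=
    integrable_of_mem_Icc μ hf hf01
  have hint' (μ : Measure X) [IsFiniteMeasure μ] : Integrable (fun x => 1 - f x) μ :=
    integrable_of_mem_Icc μ (measurable_const.sub hf)
      fun x => ⟨sub_nonneg.2 (hf01 x).2, sub_le_self _ (hf01 x).1⟩
  have on_compl : ∫ x in sᶜ, f x ∂P ≤ ∫ x in sᶜ, f x ∂Q :=
    integral_mono_measure hPQ (.of_forall fun x => (hf01 x).1) (hint _)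
  have on_s : ∫ x in s, (1 - f x) ∂Q ≤ ∫ x in s, (1 - f x) ∂P :=
    integral_mono_measure hQP
      (.of_forall fun x => sub_nonneg.2 (hf01 x).2) (hint' _)
  rw [integral_sub (integrable_const _) (hint _), integral_sub (integrable_const _) (hint _),
    setIntegral_const, setIntegral_const] at on_s
  have htv : P.real s - Q.real s ≤ tvDist P Q :=
    (le_abs_self _).trans (abs_measureReal_sub_le_tvDist P Q hs)
  rw [← integral_add_compl hs (hint P), ← integral_add_compl hs (hint Q)]
  simp only [smul_eq_mul, mul_one] at on_s
  linarith

end TotalVariation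

section Risk

variable {X : Type*} [MeasurableSpace X]

lemma abs_sub_mem_Icc_of_mem_Icc {a b : ℝ} (ha : a ∈ Set.Icc (0 : ℝ) 1)
    (hb : b ∈ Set.Icc (0 : ℝ) 1) : |a - b| ∈ Set.Icc (0 : ℝ) 1 :=
  ⟨abs_nonneg _, abs_sub_le_of_nonneg_of_le ha.1 ha.2 hb.1 hb.2⟩

lemma risk_le_risk_add_tvDist (P Q : Measure X) [IsFiniteMeasure P] [IsFiniteMeasure Q]
    {y h : X → ℝ} (hy : Measurable y) (hh : Measurable h)
    (hy01 : ∀ x, y x ∈ Set.Icc (0 : ℝ) 1) (hh01 : ∀ x, h x ∈ Set.Icc (0 : ℝ) 1) :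
    risk P y h ≤ risk Q y h + tvDist P Q :=
  integral_le_integral_add_tvDist P Q (hh.sub hy).abs
    fun x => abs_sub_mem_Icc_of_mem_Icc (hh01 x) (hy01 x)

lemma integral_abs_sub_le_risk_add_risk (μ : Measure X) {y₀ y₁ h : X → ℝ}
    (h₀ : Integrable (fun x => h x - y₀ x) μ) (h₁ : Integrable (fun x => h x - y₁ x) μ) :
    ∫ x, |y₁ x - y₀ x| ∂μ ≤ risk μ y₀ h + risk μ y₁ h := by
  rw [risk, risk, ← integral_add h₀.abs h₁.abs]
  refine integral_mono_of_nonneg (.of_forall fun x => abs_nonneg _) (h₀.abs.add h₁.abs)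
    (.of_forall fun x => ?_)
  calc |y₁ x - y₀ x| ≤ |y₁ x - h x| + |h x - y₀ x| := abs_sub_le _ _ _
    _ = |h x - y₀ x| + |h x - y₁ x| := by rw [abs_sub_comm (y₁ x), add_comm]

end Risk

theorem group_blind_impossibility {X : Type*} [MeasurableSpace X]
    (P₀ P₁ : Measure X) [IsProbabilityMeasure P₀] [IsProbabilityMeasure P₁]
    (y₀ y₁ : X → ℝ) (hy₀ : Measurable y₀) (hy₁ : Measurable y₁)
    (hy₀01 : ∀ x, y₀ x ∈ Set.Icc (0:ℝ) 1) (hy₁01 : ∀ x, y₁ x ∈ Set.Icc (0:ℝ) 1)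
    (h : X → ℝ) (hh : Measurable h) (hh01 : ∀ x, h x ∈ Set.Icc (0:ℝ) 1) :
    max (risk P₀ y₀ h) (risk P₁ y₁ h) ≥
      (1 / 2) * (max (∫ x, |y₁ x - y₀ x| ∂P₀) (∫ x, |y₁ x - y₀ x| ∂P₁)
        - tvDist P₀ P₁) := by
  have hint (μ : Measure X) [IsFiniteMeasure μ] {y : X → ℝ} (hy : Measurable y)
      (hy01 : ∀ x, y x ∈ Set.Icc (0 : ℝ) 1) : Integrable (fun x => h x - y x) μ :=
    (integrable_of_mem_Icc μ hh hh01).sub (integrable_of_mem_Icc μ hy hy01)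
  have disagreement (μ : Measure X) [IsFiniteMeasure μ] :=
    integral_abs_sub_le_risk_add_risk μ (hint μ hy₀ hy₀01) (hint μ hy₁ hy₁01)
  have transfer₀₁ := risk_le_risk_add_tvDist P₀ P₁ hy₁ hh hy₁01 hh01
  have transfer₁₀ := risk_le_risk_add_tvDist P₁ P₀ hy₀ hh hy₀01 hh01
  rw [tvDist_comm] at transfer₁₀
  have hsum : max (∫ x, |y₁ x - y₀ x| ∂P₀) (∫ x, |y₁ x - y₀ x| ∂P₁) ≤
      risk P₀ y₀ h + risk P₁ y₁ h + tvDist P₀ P₁ :=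
    max_le (by linarith [disagreement P₀]) (by linarith [disagreement P₁])
  linarith [le_max_left (risk P₀ y₀ h) (risk P₁ y₁ h),
    le_max_right (risk P₀ y₀ h) (risk P₁ y₁ h)]
end

section
/- For any classifiers h, h₀*, h₁* ∈ H, the benefit-of-splitting satisfies ε_split ≤ inf_{h∈H} max_{s∈{0,1}} E_{X∼P_s}[|h_s*(X) − h(X)|] + max_{s∈{0,1}} L_s(h_s*) − max_{s∈{0,1}} inf_{h∈H} L_s(h). -/
open MeasureTheory

/-- Benefit-of-splitting. -/
noncomputable def benefitOfSplitting {X : Type*} [MeasurableSpace X]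
    (P₀ P₁ : Measure X) (y₀ y₁ : X → ℝ) (H : Set (X → ℝ)) : ℝ :=
  sInf ((fun h => max (risk P₀ y₀ h) (risk P₁ y₁ h)) '' H)
    - max (sInf (risk P₀ y₀ '' H)) (sInf (risk P₁ y₁ '' H))

lemma integrable_abs_sub_bdd {X : Type*} [MeasurableSpace X]
    (P : Measure X) [IsProbabilityMeasure P] {f g : X → ℝ}
    (hf : Measurable f) (hg : Measurable g)
    (hf01 : ∀ x, f x ∈ Set.Icc (0:ℝ) 1) (hg01 : ∀ x, g x ∈ Set.Icc (0:ℝ) 1) :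
    Integrable (fun x => |f x - g x|) P := by
  refine (integrable_const (1:ℝ)).mono' ((hf.sub hg).abs.aestronglyMeasurable) ?_
  filter_upwards with x
  rw [Real.norm_eq_abs, abs_abs]
  have h1 := (hf01 x).1; have h2 := (hf01 x).2
  have h3 := (hg01 x).1; have h4 := (hg01 x).2
  rw [abs_sub_le_iff]; constructor <;> linarith

lemma risk_triangle {X : Type*} [MeasurableSpace X]
    (P : Measure X) [IsProbabilityMeasure P] {y g h : X → ℝ}
    (hy : Measurable y) (hg : Measurable g) (hh : Measurable h)
    (hy01 : ∀ x, y x ∈ Set.Icc (0:ℝ) 1) (hg01 : ∀ x, g x ∈ Set.Icc (0:ℝ) 1)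
    (hh01 : ∀ x, h x ∈ Set.Icc (0:ℝ) 1) :
    risk P y h ≤ (∫ x, |g x - h x| ∂P) + risk P y g := by
  unfold risk
  have h1 := integrable_abs_sub_bdd P hg hh hg01 hh01
  have h2 := integrable_abs_sub_bdd P hg hy hg01 hy01
  calc ∫ x, |h x - y x| ∂P ≤ ∫ x, (|g x - h x| + |g x - y x|) ∂P := by
        refine integral_mono (integrable_abs_sub_bdd P hh hy hh01 hy01) (h1.add h2) ?_
        intro x
        have : h x - y x = -(g x - h x) + (g x - y x) := by ring
        show |h x - y x| ≤ |g x - h x| + |g x - y x|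
        rw [this]
        exact (abs_add_le _ _).trans (by rw [abs_neg])
    _ = _ := integral_add h1 h2

theorem benefitOfSplitting_general_upper_bound {X : Type*} [MeasurableSpace X]
    (P₀ P₁ : Measure X) [IsProbabilityMeasure P₀] [IsProbabilityMeasure P₁]
    (y₀ y₁ : X → ℝ) (hy₀ : Measurable y₀) (hy₁ : Measurable y₁)
    (hy₀01 : ∀ x, y₀ x ∈ Set.Icc (0:ℝ) 1) (hy₁01 : ∀ x, y₁ x ∈ Set.Icc (0:ℝ) 1)
    (H : Set (X → ℝ))
    (hHmeas : ∀ h ∈ H, Measurable h ∧ ∀ x, h x ∈ Set.Icc (0:ℝ) 1)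
    (h₀ h₁ : X → ℝ) (h₀H : h₀ ∈ H) (h₁H : h₁ ∈ H) :
    benefitOfSplitting P₀ P₁ y₀ y₁ H ≤
      sInf ((fun h => max (∫ x, |h₀ x - h x| ∂P₀) (∫ x, |h₁ x - h x| ∂P₁)) '' H)
        + max (risk P₀ y₀ h₀) (risk P₁ y₁ h₁)
        - max (sInf (risk P₀ y₀ '' H)) (sInf (risk P₁ y₁ '' H)) := by
  unfold benefitOfSplitting
  have key : sInf ((fun h => max (risk P₀ y₀ h) (risk P₁ y₁ h)) '' H) ≤
      sInf ((fun h => max (∫ x, |h₀ x - h x| ∂P₀) (∫ x, |h₁ x - h x| ∂P₁)) '' H)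
        + max (risk P₀ y₀ h₀) (risk P₁ y₁ h₁) := by
    rw [← sub_le_iff_le_add]
    apply le_csInf (Set.Nonempty.image _ ⟨h₀, h₀H⟩)
    rintro b ⟨h, hH, rfl⟩
    rw [sub_le_iff_le_add]
    obtain ⟨hhm, hh01⟩ := hHmeas h hH
    obtain ⟨h0m, h001⟩ := hHmeas h₀ h₀H
    obtain ⟨h1m, h101⟩ := hHmeas h₁ h₁H
    calc sInf ((fun h => max (risk P₀ y₀ h) (risk P₁ y₁ h)) '' H)
        ≤ max (risk P₀ y₀ h) (risk P₁ y₁ h) := by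
          refine csInf_le ⟨0, ?_⟩ ⟨h, hH, rfl⟩
          rintro b ⟨g, hgH, rfl⟩
          exact le_max_of_le_left (integral_nonneg (fun x => abs_nonneg _))
      _ ≤ max ((∫ x, |h₀ x - h x| ∂P₀) + risk P₀ y₀ h₀)
            ((∫ x, |h₁ x - h x| ∂P₁) + risk P₁ y₁ h₁) :=
          max_le_max (risk_triangle P₀ hy₀ h0m hhm hy₀01 h001 hh01)
            (risk_triangle P₁ hy₁ h1m hhm hy₁01 h101 hh01)
      _ ≤ max (∫ x, |h₀ x - h x| ∂P₀) (∫ x, |h₁ x - h x| ∂P₁)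
            + max (risk P₀ y₀ h₀) (risk P₁ y₁ h₁) := max_add_add_le_max_add_max
  linarith
end

section
/- Let P₀ = N(−μ, 1), P₁ = N(μ, 1) with y₀(x) = 1[x > −μ], y₁(x) = 1[x < μ], and let H_interval be the class of interval indicator classifiers 1[x ∈ (a,b)] with a, b ∈ ℝ ∪ {±∞}. Then the benefit-of-splitting under H_interval is at most exp(−2μ²), and hence tends to 0 as μ → ∞. -/
open MeasureTheory ProbabilityTheory Filter

/-- Interval indicator classifiers `1[x ∈ (a,b)]` with `a, b ∈ ℝ ∪ {±∞}`
(threshold functions and constants are included). -/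
def Hinterval : Set (ℝ → ℝ) :=
  {h | ∃ a b : EReal,
    h = fun x : ℝ => if a < (x : EReal) ∧ (x : EReal) < b then (1:ℝ) else 0}

/-!
Both perfect classifiers `1[x > -μ]` and `1[x < μ]` are intervals, so both single-group
infima vanish and the benefit of splitting is at most the worse of the two group risks of the
shared classifier `1[x ∈ (-μ, μ)]`. That classifier errs on group 0 only on `[μ, ∞)` and on
group 1 only on `(-∞, -μ]`, each at distance `2μ` from the group mean, so the Chernoff bound
for a unit-variance Gaussian bounds both risks by `exp (-(2μ)² / 2) = exp (-2μ²)`.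
-/

section Risk

variable {X : Type*} [MeasurableSpace X]

lemma risk_nonneg (P : Measure X) (y h : X → ℝ) : 0 ≤ risk P y h :=
  integral_nonneg fun _ => abs_nonneg _

lemma risk_self (P : Measure X) (y : X → ℝ) : risk P y y = 0 := by
  simp [risk]

lemma risk_le_measureReal {P : Measure X} [IsFiniteMeasure P] {y h : X → ℝ} {s : Set X}
    (hs : MeasurableSet s) (hle : ∀ x, |h x - y x| ≤ s.indicator 1 x) :
    risk P y h ≤ P.real s := by
  rw [risk, ← integral_indicator_one hs]
  exact integral_mono_of_nonneg (ae_of_all _ fun _ => abs_nonneg _)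
    ((integrable_const 1).indicator hs) (ae_of_all _ hle)

lemma bddBelow_risk_image (P : Measure X) (y : X → ℝ) (H : Set (X → ℝ)) :
    BddBelow (risk P y '' H) :=
  ⟨0, by rintro _ ⟨h, -, rfl⟩; exact risk_nonneg P y h⟩

lemma sInf_risk_image_eq_zero {P : Measure X} {y : X → ℝ} {H : Set (X → ℝ)} (hy : y ∈ H) :
    sInf (risk P y '' H) = 0 :=
  le_antisymm (csInf_le (bddBelow_risk_image P y H) ⟨y, hy, risk_self P y⟩)
    (le_csInf ⟨_, y, hy, rfl⟩ (by rintro _ ⟨h, -, rfl⟩; exact risk_nonneg P y h))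

variable {P₀ P₁ : Measure X} {y₀ y₁ : X → ℝ} {H : Set (X → ℝ)}

lemma bddBelow_max_risk_image :
    BddBelow ((fun h => max (risk P₀ y₀ h) (risk P₁ y₁ h)) '' H) :=
  ⟨0, by rintro _ ⟨h, -, rfl⟩; exact le_max_of_le_left (risk_nonneg P₀ y₀ h)⟩

lemma benefitOfSplitting_nonneg (hH : H.Nonempty) :
    0 ≤ benefitOfSplitting P₀ P₁ y₀ y₁ H := by
  have hle (P : Measure X) (y : X → ℝ)
      (hmax : ∀ h, risk P y h ≤ max (risk P₀ y₀ h) (risk P₁ y₁ h)) :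
      sInf (risk P y '' H) ≤ sInf ((fun h => max (risk P₀ y₀ h) (risk P₁ y₁ h)) '' H) := by
    refine le_csInf (hH.image _) ?_
    rintro _ ⟨h, hh, rfl⟩
    exact (csInf_le (bddBelow_risk_image P y H) ⟨h, hh, rfl⟩).trans (hmax h)
  rw [benefitOfSplitting, sub_nonneg]
  exact max_le (hle P₀ y₀ fun _ => le_max_left _ _) (hle P₁ y₁ fun _ => le_max_right _ _)

lemma benefitOfSplitting_le_of_mem {h : X → ℝ} (hy₀ : y₀ ∈ H) (hy₁ : y₁ ∈ H) (hh : h ∈ H) :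
    benefitOfSplitting P₀ P₁ y₀ y₁ H ≤ max (risk P₀ y₀ h) (risk P₁ y₁ h) := by
  rw [benefitOfSplitting, sInf_risk_image_eq_zero hy₀, sInf_risk_image_eq_zero hy₁, max_self,
    sub_zero]
  exact csInf_le bddBelow_max_risk_image ⟨h, hh, rfl⟩

end Risk

namespace ProbabilityTheory

lemma hasSubgaussianMGF_sub_gaussianReal (m : ℝ) (v : NNReal) :
    HasSubgaussianMGF (fun x => x - m) v (gaussianReal m v) where
  integrable_exp_mul t := by
    simpa [mul_sub, Real.exp_sub] using
      (integrable_exp_mul_gaussianReal (μ := m) (v := v) t).div_const (Real.exp (t * m))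
  mgf_le t := by
    rw [mgf_gaussianReal (gaussianReal_map_sub_const m) t, sub_self, zero_mul, zero_add]

lemma gaussianReal_real_Ici_le (m : ℝ) (v : NNReal) {ε : ℝ} (hε : 0 ≤ ε) :
    (gaussianReal m v).real (Set.Ici (m + ε)) ≤ Real.exp (-ε ^ 2 / (2 * v)) := by
  convert (hasSubgaussianMGF_sub_gaussianReal m v).measure_ge_le hε using 3
  ext x
  simp [le_sub_iff_add_le']

lemma gaussianReal_real_Iic_le (m : ℝ) (v : NNReal) {ε : ℝ} (hε : 0 ≤ ε) :
    (gaussianReal m v).real (Set.Iic (m - ε)) ≤ Real.exp (-ε ^ 2 / (2 * v)) := by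
  convert (hasSubgaussianMGF_sub_gaussianReal m v).neg.measure_ge_le hε using 3
  ext x
  simp [le_sub_comm]

end ProbabilityTheory

lemma benefitOfSplitting_gaussian_interval_le {μ : ℝ} (hμ : 0 ≤ μ) :
    benefitOfSplitting (gaussianReal (-μ) 1) (gaussianReal μ 1)
      (fun x => if -μ < x then (1:ℝ) else 0) (fun x => if x < μ then (1:ℝ) else 0)
      Hinterval ≤ Real.exp (-2 * μ ^ 2) := by
  have hy₀ : (fun x => if -μ < x then (1:ℝ) else 0) ∈ Hinterval :=
    ⟨(-μ : ℝ), ⊤, by simp only [EReal.coe_lt_top, and_true, EReal.coe_lt_coe_iff]⟩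
  have hy₁ : (fun x => if x < μ then (1:ℝ) else 0) ∈ Hinterval :=
    ⟨⊥, (μ : ℝ), by simp only [EReal.bot_lt_coe, true_and, EReal.coe_lt_coe_iff]⟩
  have htail : Real.exp (-(2 * μ) ^ 2 / (2 * (1 : NNReal))) = Real.exp (-2 * μ ^ 2) := by
    congr 1; push_cast; ring
  refine (benefitOfSplitting_le_of_mem hy₀ hy₁ ⟨(-μ : ℝ), (μ : ℝ), rfl⟩).trans (max_le ?_ ?_)
  · calc _ ≤ (gaussianReal (-μ) 1).real (Set.Ici (-μ + 2 * μ)) := by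
          refine risk_le_measureReal measurableSet_Ici fun x => ?_
          simp only [Set.indicator, Set.mem_Ici, Pi.one_apply, EReal.coe_lt_coe_iff]
          split_ifs <;> grind
      _ ≤ _ := htail ▸ gaussianReal_real_Ici_le _ _ (by positivity)
  · calc _ ≤ (gaussianReal μ 1).real (Set.Iic (μ - 2 * μ)) := by
          refine risk_le_measureReal measurableSet_Iic fun x => ?_
          simp only [Set.indicator, Set.mem_Iic, Pi.one_apply, EReal.coe_lt_coe_iff]
          split_ifs <;> grind
      _ ≤ _ := htail ▸ gaussianReal_real_Iic_le _ _ (by positivity)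

theorem benefitOfSplitting_interval_small :
    (∀ μ : ℝ, 0 < μ →
      benefitOfSplitting (gaussianReal (-μ) 1) (gaussianReal μ 1)
        (fun x => if -μ < x then (1:ℝ) else 0)
        (fun x => if x < μ then (1:ℝ) else 0)
        Hinterval ≤ Real.exp (-2 * μ ^ 2)) ∧
    Tendsto (fun μ : ℝ =>
      benefitOfSplitting (gaussianReal (-μ) 1) (gaussianReal μ 1)
        (fun x => if -μ < x then (1:ℝ) else 0)
        (fun x => if x < μ then (1:ℝ) else 0)
        Hinterval) atTop (nhds 0) := by
  have hexp : Tendsto (fun μ : ℝ => Real.exp (-2 * μ ^ 2)) atTop (nhds 0) :=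
    Real.tendsto_exp_comp_nhds_zero.mpr <|
      (tendsto_pow_atTop two_ne_zero).const_mul_atTop_of_neg (by norm_num)
  refine ⟨fun μ hμ => benefitOfSplitting_gaussian_interval_le hμ.le, ?_⟩
  refine tendsto_of_tendsto_of_tendsto_of_le_of_le' tendsto_const_nhds hexp
    (.of_forall fun _ => benefitOfSplitting_nonneg ⟨_, ⊥, ⊤, rfl⟩) ?_
  filter_upwards [eventually_ge_atTop 0] with μ hμ
  exact benefitOfSplitting_gaussian_interval_le hμ
end
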